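/- Let A₁, …, A_m be maximal monotone operators on a real Hilbert space H, let z₁,…,z_m, w₁,…,w_m ∈ H, and for each i let (x_{i,n}, y_{i,n}) be a sequence in gra A_i with (x_{i,n}, y_{i,n}) ⇀ (z_i, w_i) weakly, Σ_{i=1}^m y_{i,n} → 0 strongly, and x_{i,n} − x_{j,n} → 0 strongly for all i, j. Then z₁ = ⋯ = z_m, w₁ + ⋯ + w_m = 0, and w_i ∈ A_i z_i for every i. In particular, the common point z = z₁ is a zero of A₁ + ⋯ + A_m. -/
import Mathlib

open scoped RealInnerProductSpace
open Filter Topology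

def MonotoneOp {E : Type*} [NormedAddCommGroup E] [InnerProductSpace ℝ E]
    (A : E → Set E) : Prop :=
  ∀ x y u v : E, u ∈ A x → v ∈ A y → 0 ≤ ⟪u - v, x - y⟫

def MaximalMonotone {E : Type*} [NormedAddCommGroup E] [InnerProductSpace ℝ E]
    (A : E → Set E) : Prop :=
  MonotoneOp A ∧ ∀ x u : E, (∀ y v : E, v ∈ A y → 0 ≤ ⟪u - v, x - y⟫) → u ∈ A x

lemma weak_bdd {H : Type*} [NormedAddCommGroup H] [InnerProductSpace ℝ H] [CompleteSpace H]
    (a : ℕ → H) (l : H) (h : ∀ v, Tendsto (fun n => ⟪a n, v⟫) atTop (𝓝 ⟪l, v⟫)) :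
    ∃ C, ∀ n, ‖a n‖ ≤ C := by
  have hbs : ∃ C', ∀ n, ‖innerSL ℝ (a n)‖ ≤ C' := by
    apply banach_steinhaus
    intro v
    obtain ⟨C, hC⟩ := (h v).norm.bddAbove_range
    exact ⟨C, fun n => by simpa using hC ⟨n, rfl⟩⟩
  obtain ⟨C, hC⟩ := hbs
  exact ⟨C, fun n => by simpa [innerSL_apply_norm] using hC n⟩

lemma weak_strong {H : Type*} [NormedAddCommGroup H] [InnerProductSpace ℝ H]
    (a b : ℕ → H) (C : ℝ) (hC : ∀ n, ‖a n‖ ≤ C) (hb : Tendsto b atTop (𝓝 0)) :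
    Tendsto (fun n => ⟪a n, b n⟫) atTop (𝓝 0) := by
  have hg : Tendsto (fun n => C * ‖b n‖) atTop (𝓝 0) := by
    simpa using hb.norm.const_mul C
  refine squeeze_zero_norm (fun n => ?_) hg
  calc ‖⟪a n, b n⟫‖ ≤ ‖a n‖ * ‖b n‖ := norm_inner_le_norm _ _
    _ ≤ C * ‖b n‖ := mul_le_mul_of_nonneg_right (hC n) (norm_nonneg _)

/-- If `(x_{i,n}, y_{i,n}) ∈ gra A_i`, `(x_{i,n}, y_{i,n}) ⇀ (z_i, w_i)`,
`∑ y_{i,n} → 0`, and `x_{i,n} − x_{j,n} → 0`, then `z₁ = ⋯ = z_m`, `∑ w_i = 0`, and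
`w_i ∈ A_i z_i` for all `i`; in particular `z₁` is a zero of `A₁ + ⋯ + A_m`. -/
theorem stmt15 {H : Type*} [NormedAddCommGroup H] [InnerProductSpace ℝ H] [CompleteSpace H]
    (m : ℕ) (hm : 0 < m)
    (A : Fin m → (H → Set H)) (hA : ∀ i, MaximalMonotone (A i))
    (z w : Fin m → H) (x y : Fin m → ℕ → H)
    (hgra : ∀ i n, y i n ∈ A i (x i n))
    (hxw : ∀ i, ∀ v : H, Tendsto (fun n => ⟪x i n, v⟫) atTop (𝓝 ⟪z i, v⟫))
    (hyw : ∀ i, ∀ v : H, Tendsto (fun n => ⟪y i n, v⟫) atTop (𝓝 ⟪w i, v⟫))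
    (hsum : Tendsto (fun n => ∑ i, y i n) atTop (𝓝 0))
    (hdiff : ∀ i j, Tendsto (fun n => x i n - x j n) atTop (𝓝 0)) :
    (∀ i j, z i = z j) ∧ (∑ i, w i = 0) ∧ (∀ i, w i ∈ A i (z i)) ∧
      (0 : H) ∈ {s : H | ∃ u : Fin m → H,
        (∀ i, u i ∈ A i (z ⟨0, hm⟩)) ∧ ∑ i, u i = s} := by
  set i0 : Fin m := ⟨0, hm⟩ with hi0
  -- z i = z j
  have hzeq : ∀ i j, z i = z j := by
    intro i j
    have h1 : ∀ v : H, ⟪z i - z j, v⟫ = 0 := by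
      intro v
      have ha : Tendsto (fun n => ⟪x i n - x j n, v⟫) atTop (𝓝 ⟪z i - z j, v⟫) := by
        simp only [inner_sub_left]
        exact (hxw i v).sub (hxw j v)
      have hb : Tendsto (fun n => ⟪x i n - x j n, v⟫) atTop (𝓝 (0 : ℝ)) := by
        have := Filter.Tendsto.inner (𝕜 := ℝ) (hdiff i j) (tendsto_const_nhds (x := v))
        simpa using this
      exact tendsto_nhds_unique ha hb
    have := h1 (z i - z j)
    rw [inner_self_eq_zero (𝕜 := ℝ), sub_eq_zero] at this
    exact this
  -- ∑ w = 0
  have hsumw : ∑ i, w i = 0 := by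
    have h1 : ∀ v : H, ⟪∑ i, w i, v⟫ = 0 := by
      intro v
      have ha : Tendsto (fun n => ⟪∑ i, y i n, v⟫) atTop (𝓝 ⟪∑ i, w i, v⟫) := by
        simp only [sum_inner]
        exact tendsto_finset_sum _ fun i _ => hyw i v
      have hb : Tendsto (fun n => ⟪∑ i, y i n, v⟫) atTop (𝓝 (0 : ℝ)) := by
        have := Filter.Tendsto.inner (𝕜 := ℝ) hsum (tendsto_const_nhds (x := v))
        simpa using this
      exact tendsto_nhds_unique ha hb
    have := h1 (∑ i, w i)
    rwa [inner_self_eq_zero (𝕜 := ℝ)] at this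
  -- boundedness
  have hxb : ∀ i, ∃ C, ∀ n, ‖x i n‖ ≤ C := fun i => weak_bdd _ (z i) (hxw i)
  have hyb : ∀ i, ∃ C, ∀ n, ‖y i n‖ ≤ C := fun i => weak_bdd _ (w i) (hyw i)
  choose Cx hCx using hxb
  choose Cy hCy using hyb
  -- key inequality
  have key : ∀ b v : Fin m → H, (∀ j, v j ∈ A j (b j)) →
      0 ≤ ∑ j, ⟪w j - v j, z j - b j⟫ := by
    intro b v hbv
    have hT : Tendsto
        (fun n => (∑ j, (⟪y j n, x j n - x i0 n⟫ - ⟪y j n, b j⟫ - ⟪v j, x j n⟫ + ⟪v j, b j⟫))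
          + ⟪x i0 n, ∑ j, y j n⟫) atTop
        (𝓝 ((∑ j, ((0:ℝ) - ⟪w j, b j⟫ - ⟪v j, z j⟫ + ⟪v j, b j⟫)) + 0)) := by
      refine Tendsto.add (tendsto_finset_sum _ fun j _ => ?_)
        (weak_strong (x i0) (fun n => ∑ j, y j n) (Cx i0) (hCx i0) hsum)
      have h1 : Tendsto (fun n => ⟪y j n, x j n - x i0 n⟫) atTop (𝓝 (0:ℝ)) :=
        weak_strong (y j) _ (Cy j) (hCy j) (hdiff j i0)
      have h2 : Tendsto (fun n => ⟪y j n, b j⟫) atTop (𝓝 ⟪w j, b j⟫) := hyw j (b j)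
      have h3 : Tendsto (fun n => ⟪v j, x j n⟫) atTop (𝓝 ⟪v j, z j⟫) := by
        have := hxw j (v j)
        simpa [real_inner_comm] using this
      exact ((h1.sub h2).sub h3).add tendsto_const_nhds
    have hT' : ∀ n, (∑ j, (⟪y j n, x j n - x i0 n⟫ - ⟪y j n, b j⟫ - ⟪v j, x j n⟫ + ⟪v j, b j⟫))
        + ⟪x i0 n, ∑ j, y j n⟫ = ∑ j, ⟪y j n - v j, x j n - b j⟫ := by
      intro n
      have hx0 : ⟪x i0 n, ∑ j, y j n⟫ = ∑ j, ⟪y j n, x i0 n⟫ := by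
        rw [inner_sum]
        exact Finset.sum_congr rfl fun j _ => real_inner_comm _ _
      rw [hx0, ← Finset.sum_add_distrib]
      refine Finset.sum_congr rfl fun j _ => ?_
      simp only [inner_sub_left, inner_sub_right]
      ring
    have hTlim : Tendsto (fun n => ∑ j, ⟪y j n - v j, x j n - b j⟫) atTop
        (𝓝 ((∑ j, ((0:ℝ) - ⟪w j, b j⟫ - ⟪v j, z j⟫ + ⟪v j, b j⟫)) + 0)) :=
      hT.congr hT'
    have hnn : ∀ n, (0:ℝ) ≤ ∑ j, ⟪y j n - v j, x j n - b j⟫ :=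
      fun n => Finset.sum_nonneg fun j _ =>
        (hA j).1 (x j n) (b j) (y j n) (v j) (hgra j n) (hbv j)
    have hL : (0:ℝ) ≤ (∑ j, ((0:ℝ) - ⟪w j, b j⟫ - ⟪v j, z j⟫ + ⟪v j, b j⟫)) + 0 :=
      ge_of_tendsto' hTlim hnn
    have hwz : ∑ j, ⟪w j, z j⟫ = 0 := by
      have h1 : ∑ j, ⟪w j, z j⟫ = ∑ j, ⟪w j, z i0⟫ :=
        Finset.sum_congr rfl fun j _ => by rw [hzeq j i0]
      rw [h1, ← sum_inner, hsumw, inner_zero_left]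
    have hexp : ∑ j, ⟪w j - v j, z j - b j⟫
        = ∑ j, ⟪w j, z j⟫ + ∑ j, ((0:ℝ) - ⟪w j, b j⟫ - ⟪v j, z j⟫ + ⟪v j, b j⟫) := by
      rw [← Finset.sum_add_distrib]
      refine Finset.sum_congr rfl fun j _ => ?_
      simp only [inner_sub_left, inner_sub_right]
      ring
    rw [hexp, hwz, zero_add]
    simpa using hL
  -- membership
  have hmem : ∀ i, w i ∈ A i (z i) := by
    intro i
    refine (hA i).2 (z i) (w i) fun b v hv => ?_
    have hch : ∀ j, ∃ p q : H, q ∈ A j p ∧ ⟪w j - q, z j - p⟫ ≤ 0 := by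
      intro j
      by_cases hj : w j ∈ A j (z j)
      · exact ⟨z j, w j, hj, by simp⟩
      · have hne : ¬ (∀ p q : H, q ∈ A j p → 0 ≤ ⟪w j - q, z j - p⟫) :=
          fun h' => hj ((hA j).2 _ _ h')
        push_neg at hne
        obtain ⟨p, q, hq, hlt⟩ := hne
        exact ⟨p, q, hq, hlt.le⟩
    choose p q hq hle using hch
    set b' := Function.update p i b with hb'
    set v' := Function.update q i v with hv'
    have hbv' : ∀ j, v' j ∈ A j (b' j) := by
      intro j
      by_cases h : j = i
      · subst h; simp [hb', hv', hv]
      · simp [hb', hv', Function.update_of_ne h, hq j]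
    have hK := key b' v' hbv'
    rw [← Finset.add_sum_erase _ _ (Finset.mem_univ i)] at hK
    have hrest : ∑ j ∈ Finset.univ.erase i, ⟪w j - v' j, z j - b' j⟫ ≤ 0 := by
      refine Finset.sum_nonpos fun j hj => ?_
      have hji : j ≠ i := Finset.ne_of_mem_erase hj
      simpa [hb', hv', Function.update_of_ne hji] using hle j
    have hi : ⟪w i - v' i, z i - b' i⟫ = ⟪w i - v, z i - b⟫ := by
      simp [hb', hv']
    rw [hi] at hK
    linarith
  refine ⟨hzeq, hsumw, hmem, ⟨w, fun i => ?_, hsumw⟩⟩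
  rw [hzeq i0 i]
  exact hmem i
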